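/- Let n ≥ 2 and let S be an n×n irreducible column stochastic matrix such that RSR⁻¹ is symmetric for some invertible diagonal matrix R; write S(d) = (1−d)I + dS for d ∈ [0, 1]. Let F₁ and F₂ be n×n diagonal matrices with positive diagonal entries such that F₂ ≠ F₁ (temporal heterogeneity) and at least one of F₁, F₂ is non-scalar (spatial heterogeneity). Let d₁, …, d_m ∈ [0, 1] and suppose for each i there is an entrywise positive vector xᵢ with S(dᵢ)F₂S(dᵢ)F₁ xᵢ = xᵢ (the resident coalition has a positive period-2 point). If the coalition is a (possibly mixed) Nash equilibrium, i.e. the spectral radius ρ(S(d̃)F₂S(d̃)F₁) ≤ 1 for every d̃ ∈ [0, 1], then: (1) max_i dᵢ > 0; (2) (F₁)_{jj}(F₂)_{jj} ≤ 1 for every patch j (no source patches); and (3) (F₁)_{jj}(F₂)_{jj} < 1 for at least one patch j (at least one sink patch). -/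

import Mathlib

open Matrix

/-- The spectral radius of a real square matrix: the maximum modulus of its complex
eigenvalues. -/
noncomputable def specRad {n : ℕ} (M : Matrix (Fin n) (Fin n) ℝ) : ℝ :=
  sSup ((fun μ => ‖μ‖) '' spectrum ℂ (M.map (fun x => (x : ℂ))))

/-- A real square matrix is column stochastic if its entries are nonnegative and each
column sums to one. -/
def ColStochastic {n : ℕ} (S : Matrix (Fin n) (Fin n) ℝ) : Prop :=
  (∀ i j, 0 ≤ S i j) ∧ ∀ j, ∑ i, S i j = 1

/-- A square matrix is irreducible if for every pair of indices `(j,k)` some positive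
power has positive `(j,k)` entry. -/
def MatIrreducible {n : ℕ} (S : Matrix (Fin n) (Fin n) ℝ) : Prop :=
  ∀ j k : Fin n, ∃ p : ℕ, 0 < p ∧ 0 < (S ^ p) j k

/-!
At `d̃ = 0` the Nash condition reads `ρ(F₂F₁) ≤ 1`, which excludes sources, and a positive period-2
point of a coalition with every `dᵢ = 0` makes every patch balanced. So everything reduces to
showing that not every patch is balanced.

Suppose `F₂ = F₁⁻¹`. If `w = r²` are the detailed-balance weights of `S` and `p = √(w / F₁)`, then
`S F₁⁻¹ S F₁` is diagonally similar to `EᵀE` with `E = P S P⁻¹`. As `S` is column stochastic, `Eᵀ`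
fixes `p⁻¹`, hence `‖E p⁻¹‖² = ‖p⁻¹‖² + ‖E p⁻¹ - p⁻¹‖²`. If `E p⁻¹ ≠ p⁻¹`, the Rayleigh principle
gives an eigenvalue of `EᵀE` above `1`, against the Nash condition at `d̃ = 1`. If `E p⁻¹ = p⁻¹`,
then `S` fixes `F₁ / w` as well as `1 / w`, and Perron–Frobenius uniqueness for the irreducible `S`
makes `F₁` scalar, against spatial heterogeneity.
-/

section SpectralRadius

variable {n : ℕ}

theorem abs_le_specRad_of_mulVec_eq_smul (M : Matrix (Fin n) (Fin n) ℝ) {t : ℝ}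
    {v : Fin n → ℝ} (hv : v ≠ 0) (h : M *ᵥ v = t • v) : |t| ≤ specRad M := by
  set Mc := M.map (fun x => (x : ℂ))
  set vc : Fin n → ℂ := fun i => (v i : ℂ)
  have hvc : vc ≠ 0 := fun h0 => hv <| funext fun i => by simpa [vc] using congrFun h0 i
  have heig : Mc *ᵥ vc = (t : ℂ) • vc := by
    funext i
    have hi := congrArg Complex.ofRealHom (congrFun h i)
    rw [RingHom.map_mulVec] at hi
    exact hi.trans (by simp [vc])
  have hmem : (t : ℂ) ∈ spectrum ℂ Mc := by
    rw [← spectrum_toLin', ← Module.End.hasEigenvalue_iff_mem_spectrum]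
    exact Module.End.hasEigenvalue_of_hasEigenvector
      ⟨Module.End.mem_eigenspace_iff.mpr (by rw [toLin'_apply, heig]), hvc⟩
  have hbdd : BddAbove ((fun μ : ℂ => ‖μ‖) '' spectrum ℂ Mc) :=
    ((Matrix.finite_spectrum Mc).image _).bddAbove
  calc |t| = ‖(t : ℂ)‖ := by simp
    _ ≤ specRad M := le_csSup hbdd ⟨_, hmem, rfl⟩

theorem abs_le_specRad_conj_of_mulVec_eq_smul {P P' N : Matrix (Fin n) (Fin n) ℝ}
    (hP : P * P' = 1) {t : ℝ} {w : Fin n → ℝ} (hw : w ≠ 0) (h : N *ᵥ w = t • w) :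
    |t| ≤ specRad (P' * N * P) := by
  refine abs_le_specRad_of_mulVec_eq_smul _ (v := P' *ᵥ w) (fun h0 => hw ?_) ?_
  · rw [← one_mulVec w, ← hP, ← mulVec_mulVec, h0, mulVec_zero]
  · rw [mulVec_mulVec, mul_assoc _ P, hP, mul_one, ← mulVec_mulVec, h, mulVec_smul]

theorem abs_le_specRad_diagonal (d : Fin n → ℝ) (j : Fin n) : |d j| ≤ specRad (diagonal d) :=
  abs_le_specRad_of_mulVec_eq_smul _ (v := Pi.single j 1) (by simp)
    (by rw [diagonal_mulVec_single, mul_one, ← Pi.single_smul', smul_eq_mul, mul_one])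

end SpectralRadius

theorem diagonal_mul_diagonal_inv {ι K : Type*} [Fintype ι] [DecidableEq ι] [DivisionRing K]
    {v : ι → K} (hv : ∀ i, v i ≠ 0) : diagonal v * diagonal v⁻¹ = 1 := by
  rw [diagonal_mul_diagonal, ← diagonal_one]
  exact congrArg diagonal (funext fun i => mul_inv_cancel₀ (hv i))

theorem Matrix.IsHermitian.exists_eigenvector_dotProduct_mulVec_le {ι : Type*} [Fintype ι]
    [DecidableEq ι] [Nonempty ι] {A : Matrix ι ι ℝ} (hA : A.IsHermitian) (v : ι → ℝ) :
    ∃ t : ℝ, ∃ w : ι → ℝ, w ≠ 0 ∧ A *ᵥ w = t • w ∧ v ⬝ᵥ (A *ᵥ v) ≤ t * (v ⬝ᵥ v) := by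
  set b := hA.eigenvectorBasis
  obtain ⟨i₀, -, hi₀⟩ := Finset.exists_mem_eq_sup' Finset.univ_nonempty hA.eigenvalues
  refine ⟨hA.eigenvalues i₀, b i₀, fun h0 => b.orthonormal.ne_zero i₀ ?_,
    hA.mulVec_eigenvectorBasis i₀, ?_⟩
  · ext i; simpa using congrFun h0 i
  have hinner : ∀ x y : ι → ℝ, x ⬝ᵥ y = inner ℝ (WithLp.toLp 2 x) (WithLp.toLp 2 y) := by
    intro x y; simp [EuclideanSpace.inner_eq_star_dotProduct, dotProduct_comm]
  have hcoord : ∀ i, inner ℝ (b i) (WithLp.toLp 2 (A *ᵥ v)) =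
      hA.eigenvalues i * inner ℝ (WithLp.toLp 2 v) (b i) := by
    intro i
    have hAT : Aᵀ = A := (isHermitian_iff_isSymm.mp hA).eq
    rw [← WithLp.toLp_ofLp (x := b i), ← hinner, ← hinner, dotProduct_mulVec, ← mulVec_transpose,
      hAT, hA.mulVec_eigenvectorBasis, smul_dotProduct, smul_eq_mul, dotProduct_comm]
  rw [hinner, hinner, ← b.sum_inner_mul_inner, ← b.sum_inner_mul_inner, Finset.mul_sum]
  refine Finset.sum_le_sum fun i _ => ?_
  rw [hcoord, real_inner_comm _ (b i), mul_left_comm]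
  exact mul_le_mul_of_nonneg_right (hi₀ ▸ Finset.le_sup' _ (Finset.mem_univ i))
    (mul_self_nonneg _)

theorem dotProduct_self_lt_of_transpose_mulVec_eq_self {ι R : Type*} [Fintype ι] [CommRing R]
    [LinearOrder R] [IsStrictOrderedRing R] {E : Matrix ι ι R} {v : ι → R}
    (hT : Eᵀ *ᵥ v = v) (hne : E *ᵥ v ≠ v) : v ⬝ᵥ v < (E *ᵥ v) ⬝ᵥ (E *ᵥ v) := by
  have hcross : v ⬝ᵥ (E *ᵥ v) = v ⬝ᵥ v := by rw [dotProduct_mulVec, ← mulVec_transpose, hT]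
  have hpos : 0 < (E *ᵥ v - v) ⬝ᵥ (E *ᵥ v - v) :=
    lt_of_le_of_ne (Finset.sum_nonneg fun i _ => mul_self_nonneg _)
      (Ne.symm (dotProduct_self_eq_zero.not.mpr (sub_ne_zero.mpr hne)))
  have hpythagoras :
      (E *ᵥ v) ⬝ᵥ (E *ᵥ v) = v ⬝ᵥ v + (E *ᵥ v - v) ⬝ᵥ (E *ᵥ v - v) := by
    simp only [sub_dotProduct, dotProduct_sub, dotProduct_comm (E *ᵥ v) v, hcross]
    ring
  linarith

theorem one_lt_specRad_of_transpose_mulVec_eq_self {n : ℕ} {E P P' : Matrix (Fin n) (Fin n) ℝ}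
    (hP : P * P' = 1) {v : Fin n → ℝ} (hT : Eᵀ *ᵥ v = v) (hne : E *ᵥ v ≠ v) :
    1 < specRad (P' * (Eᵀ * E) * P) := by
  obtain ⟨i, -⟩ := Function.ne_iff.mp hne
  have : Nonempty (Fin n) := ⟨i⟩
  have hEE : (Eᵀ * E).IsHermitian := by
    simpa [conjTranspose_eq_transpose_of_trivial] using isHermitian_conjTranspose_mul_self E
  obtain ⟨t, u, hu, htu, hray⟩ := hEE.exists_eigenvector_dotProduct_mulVec_le v
  rw [← mulVec_mulVec, dotProduct_mulVec, ← mulVec_transpose, transpose_transpose] at hray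
  have hlt := dotProduct_self_lt_of_transpose_mulVec_eq_self hT hne
  have ht : 1 < t := lt_of_mul_lt_mul_right (by linarith : 1 * (v ⬝ᵥ v) < t * (v ⬝ᵥ v))
    (Finset.sum_nonneg fun i _ => mul_self_nonneg (v i))
  exact ht.trans_le ((le_abs_self t).trans (abs_le_specRad_conj_of_mulVec_eq_smul hP hu htu))

theorem MatIrreducible.eq_smul_of_mulVec_eq_self {n : ℕ} {S : Matrix (Fin n) (Fin n) ℝ}
    (hirr : MatIrreducible S) (hS : ∀ i j, 0 ≤ S i j) {y z : Fin n → ℝ} (hy : ∀ j, 0 < y j)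
    (hSy : S *ᵥ y = y) (hSz : S *ᵥ z = z) : ∃ c : ℝ, z = c • y := by
  rcases isEmpty_or_nonempty (Fin n) with _ | _
  · exact ⟨0, Subsingleton.elim _ _⟩
  -- `w = z - c • y` is a nonnegative fixed vector vanishing at `j₀`; irreducibility spreads the zero.
  obtain ⟨j₀, -, hj₀⟩ := Finset.exists_mem_eq_inf' Finset.univ_nonempty (fun j => z j / y j)
  set c := z j₀ / y j₀
  set w := z - c • y with hw_def
  have hw : ∀ j, 0 ≤ w j := fun j => by
    have hc : c ≤ z j / y j := hj₀ ▸ Finset.inf'_le _ (Finset.mem_univ j)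
    simpa [w, sub_nonneg, mul_comm] using (le_div_iff₀ (hy j)).mp hc
  have hwj₀ : w j₀ = 0 := by simp [w, c, div_mul_cancel₀ _ (hy j₀).ne']
  have hSw : S *ᵥ w = w := by rw [hw_def, mulVec_sub, mulVec_smul, hSy, hSz]
  have hSpw : ∀ p : ℕ, (S ^ p) *ᵥ w = w := by
    intro p
    induction p with
    | zero => simp
    | succ p ih => rw [pow_succ', ← mulVec_mulVec, ih, hSw]
  refine ⟨c, funext fun k => ?_⟩
  obtain ⟨p, -, hp⟩ := hirr j₀ k
  have hsum : ∑ t, (S ^ p) j₀ t * w t = 0 := by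
    simpa only [mulVec, dotProduct, hwj₀] using congrFun (hSpw p) j₀
  have hterm := (Finset.sum_eq_zero_iff_of_nonneg fun t _ =>
    mul_nonneg (pow_apply_nonneg hS p j₀ t) (hw t)).mp hsum k (Finset.mem_univ k)
  have hwk : w k = 0 := (mul_eq_zero.mp hterm).resolve_left hp.ne'
  simpa [w, sub_eq_zero] using hwk

section DetailedBalance

variable {n : ℕ} {S : Matrix (Fin n) (Fin n) ℝ}

theorem sq_mul_eq_sq_mul_of_isSymm_diagonal_conj {r : Fin n → ℝ} (hr : ∀ i, r i ≠ 0)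
    (hsym : (diagonal r * S * (diagonal r)⁻¹).IsSymm) (j k : Fin n) :
    r j ^ 2 * S j k = r k ^ 2 * S k j := by
  have h := hsym.apply j k
  rw [inv_eq_right_inv (diagonal_mul_diagonal_inv hr)] at h
  simp only [mul_diagonal, diagonal_mul, Pi.inv_apply] at h
  have := hr j; have := hr k
  field_simp at h
  linear_combination -h

theorem ColStochastic.mulVec_inv_eq_self (hS : ColStochastic S) {w : Fin n → ℝ}
    (hw : ∀ j, w j ≠ 0) (hrev : ∀ j k, w j * S j k = w k * S k j) : S *ᵥ w⁻¹ = w⁻¹ := by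
  funext i
  have hterm : ∀ j, S i j * (w j)⁻¹ = S j i * (w i)⁻¹ := fun j => by
    have := hw i; have := hw j
    field_simp
    linear_combination hrev i j
  simp only [mulVec, dotProduct, Pi.inv_apply, hterm, ← Finset.sum_mul, hS.2 i, one_mul]

theorem ColStochastic.transpose_diagonal_conj_mulVec_inv (hS : ColStochastic S)
    {p : Fin n → ℝ} (hp : ∀ j, p j ≠ 0) : (diagonal p * S * diagonal p⁻¹)ᵀ *ᵥ p⁻¹ = p⁻¹ := by
  funext i
  have hterm : ∀ j, p j * S j i * (p i)⁻¹ * (p j)⁻¹ = S j i * (p i)⁻¹ := fun j => by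
    field_simp [hp j]
  simp only [mulVec, dotProduct, transpose_apply, mul_diagonal, diagonal_mul, Pi.inv_apply,
    hterm, ← Finset.sum_mul, hS.2 i, one_mul]

theorem mulVec_inv_mul_inv_of_diagonal_conj_mulVec_inv {p : Fin n → ℝ} (hp : ∀ j, p j ≠ 0)
    (h : (diagonal p * S * diagonal p⁻¹) *ᵥ p⁻¹ = p⁻¹) : S *ᵥ (p⁻¹ * p⁻¹) = p⁻¹ * p⁻¹ := by
  funext i
  have hi := congrFun h i
  simp only [mulVec, dotProduct, mul_diagonal, diagonal_mul, Pi.inv_apply, Pi.mul_apply] at hi ⊢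
  have := hp i
  calc ∑ j, S i j * ((p j)⁻¹ * (p j)⁻¹)
      = (p i)⁻¹ * ∑ j, p i * S i j * (p j)⁻¹ * (p j)⁻¹ := by
        rw [Finset.mul_sum]; refine Finset.sum_congr rfl fun j _ => ?_; field_simp
    _ = (p i)⁻¹ * (p i)⁻¹ := by rw [hi]

theorem mul_diagonal_inv_mul_eq_diagonal_conj_transpose_mul_self {w f p : Fin n → ℝ}
    (hrev : ∀ j k, w j * S j k = w k * S k j) (hf : ∀ j, f j ≠ 0) (hp : ∀ j, p j ≠ 0)
    (hp2 : ∀ j, f j * p j ^ 2 = w j) :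
    S * diagonal f⁻¹ * (S * diagonal f) = diagonal (f * p)⁻¹ *
      ((diagonal p * S * diagonal p⁻¹)ᵀ * (diagonal p * S * diagonal p⁻¹)) * diagonal (f * p) := by
  ext i j
  rw [mul_diagonal, diagonal_mul, mul_apply, mul_apply, Finset.mul_sum, Finset.sum_mul]
  refine Finset.sum_congr rfl fun k _ => ?_
  simp only [transpose_apply, mul_diagonal, diagonal_mul, Pi.inv_apply, Pi.mul_apply]
  have hrev' := hrev i k
  rw [← hp2 i, ← hp2 k] at hrev'
  have := hf i; have := hf k; have := hp i; have := hp j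
  field_simp
  linear_combination (S k j * f j) * hrev'

theorem one_lt_specRad_of_detailed_balance (hS : ColStochastic S) (hirr : MatIrreducible S)
    {w : Fin n → ℝ} (hw : ∀ j, 0 < w j) (hrev : ∀ j k, w j * S j k = w k * S k j)
    {f : Fin n → ℝ} (hf : ∀ j, 0 < f j) (hspat : ∃ j k, f j ≠ f k) :
    1 < specRad (S * diagonal f⁻¹ * (S * diagonal f)) := by
  set p : Fin n → ℝ := fun j => Real.sqrt (w j / f j)
  have hp : ∀ j, 0 < p j := fun j => Real.sqrt_pos.mpr (div_pos (hw j) (hf j))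
  have hp2 : ∀ j, f j * p j ^ 2 = w j := fun j => by
    rw [Real.sq_sqrt (div_pos (hw j) (hf j)).le, mul_div_cancel₀ _ (hf j).ne']
  have hEv : (diagonal p * S * diagonal p⁻¹) *ᵥ p⁻¹ ≠ p⁻¹ := by
    intro hEv
    obtain ⟨c, hc⟩ := hirr.eq_smul_of_mulVec_eq_self hS.1 (fun j => inv_pos.mpr (hw j))
      (hS.mulVec_inv_eq_self (fun j => (hw j).ne') hrev)
      (mulVec_inv_mul_inv_of_diagonal_conj_mulVec_inv (fun j => (hp j).ne') hEv)
    have hfc : ∀ j, f j = c := fun j => by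
      have hj := congrFun hc j
      simp only [Pi.mul_apply, Pi.inv_apply, Pi.smul_apply, smul_eq_mul, ← hp2 j] at hj
      have := hf j; have := hp j
      field_simp at hj
      linarith
    obtain ⟨j, k, hjk⟩ := hspat
    exact hjk ((hfc j).trans (hfc k).symm)
  rw [mul_diagonal_inv_mul_eq_diagonal_conj_transpose_mul_self hrev (fun j => (hf j).ne')
    (fun j => (hp j).ne') hp2]
  exact one_lt_specRad_of_transpose_mulVec_eq_self
    (diagonal_mul_diagonal_inv fun j => (mul_pos (hf j) (hp j)).ne')
    (hS.transpose_diagonal_conj_mulVec_inv fun j => (hp j).ne') hEv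

theorem exists_mul_ne_one_of_specRad_le_one (hS : ColStochastic S) (hirr : MatIrreducible S)
    {r : Fin n → ℝ} (hr : ∀ i, r i ≠ 0) (hsym : (diagonal r * S * (diagonal r)⁻¹).IsSymm)
    {f₁ f₂ : Fin n → ℝ} (hf₁ : ∀ j, 0 < f₁ j)
    (hspat : (∃ j k, f₁ j ≠ f₁ k) ∨ (∃ j k, f₂ j ≠ f₂ k))
    (hle : specRad (S * diagonal f₂ * (S * diagonal f₁)) ≤ 1) : ∃ j, f₁ j * f₂ j ≠ 1 := by
  by_contra! hbal
  have hf₂ : f₂ = f₁⁻¹ := funext fun j => eq_inv_of_mul_eq_one_right (hbal j)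
  have hspat₁ : ∃ j k, f₁ j ≠ f₁ k := by
    rcases hspat with h | ⟨j, k, hjk⟩
    · exact h
    · exact ⟨j, k, fun h => hjk (by rw [hf₂, Pi.inv_apply, Pi.inv_apply, h])⟩
  rw [hf₂] at hle
  exact hle.not_gt <| one_lt_specRad_of_detailed_balance hS hirr (fun j => sq_pos_of_ne_zero (hr j))
    (sq_mul_eq_sq_mul_of_isSymm_diagonal_conj hr hsym) hf₁ hspat₁

end DetailedBalance

theorem nash_equilibrium_sinks_general {n m : ℕ} (hm : 0 < m)
    (S : Matrix (Fin n) (Fin n) ℝ) (hS : ColStochastic S) (hirr : MatIrreducible S)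
    (r : Fin n → ℝ) (hr : ∀ i, r i ≠ 0)
    (hsym : (Matrix.diagonal r * S * (Matrix.diagonal r)⁻¹).IsSymm)
    (f₁ f₂ : Fin n → ℝ) (hf₁ : ∀ j, 0 < f₁ j)
    (hspat : (∃ j k, f₁ j ≠ f₁ k) ∨ (∃ j k, f₂ j ≠ f₂ k))
    (d : Fin m → ℝ) (hd : ∀ i, d i ∈ Set.Icc (0 : ℝ) 1)
    (hfix : ∀ i, ∃ x : Fin n → ℝ, (∀ j, 0 < x j) ∧
      (((1 - d i) • 1 + d i • S) * Matrix.diagonal f₂ *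
        (((1 - d i) • 1 + d i • S) * Matrix.diagonal f₁)).mulVec x = x)
    (hnash : ∀ dt : ℝ, 0 ≤ dt → dt ≤ 1 →
      specRad (((1 - dt) • 1 + dt • S) * Matrix.diagonal f₂ *
        (((1 - dt) • 1 + dt • S) * Matrix.diagonal f₁)) ≤ 1) :
    (∃ i, 0 < d i) ∧ (∀ j, f₁ j * f₂ j ≤ 1) ∧ (∃ j, f₁ j * f₂ j < 1) := by
  have hstay : (1 - (0 : ℝ)) • (1 : Matrix (Fin n) (Fin n) ℝ) + (0 : ℝ) • S = 1 := by simp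
  have hdiag : (1 : Matrix (Fin n) (Fin n) ℝ) * diagonal f₂ * (1 * diagonal f₁) =
      diagonal (f₂ * f₁) := by rw [one_mul, one_mul, diagonal_mul_diagonal]; rfl
  have hsource : ∀ j, f₁ j * f₂ j ≤ 1 := fun j => by
    have h0 := hnash 0 le_rfl zero_le_one
    rw [hstay, hdiag] at h0
    exact (mul_comm (f₁ j) _).trans_le <| (le_abs_self _).trans <|
      (abs_le_specRad_diagonal _ j).trans h0
  have h1 := hnash 1 zero_le_one le_rfl
  rw [sub_self, zero_smul, zero_add, one_smul] at h1
  obtain ⟨j₀, hj₀⟩ := exists_mul_ne_one_of_specRad_le_one hS hirr hr hsym hf₁ hspat h1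
  refine ⟨?_, hsource, j₀, (hsource j₀).lt_of_ne hj₀⟩
  by_contra! hd0
  obtain ⟨x, hx, hfx⟩ := hfix ⟨0, hm⟩
  rw [le_antisymm (hd0 _) (hd _).1, hstay, hdiag] at hfx
  refine hj₀ (mul_right_cancel₀ (hx j₀).ne' ?_)
  simpa [mulVec_diagonal, mul_comm (f₁ j₀)] using congrFun hfx j₀

/-- Period-2 environments: if the resident coalition `d₁,…,d_m` has a positive period-2
point and is a (possibly mixed) Nash equilibrium (`ρ(S(d̃)F₂S(d̃)F₁) ≤ 1` for all
`d̃ ∈ [0,1]`), with `F₁ ≠ F₂` (temporal heterogeneity) and some `Fₜ` non-scalar (spatial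
heterogeneity), then some `dᵢ > 0`, no patch is a source, and some patch is a sink. -/
theorem nash_equilibrium_sinks {n m : ℕ} (hn : 2 ≤ n) (hm : 0 < m)
    (S : Matrix (Fin n) (Fin n) ℝ) (hS : ColStochastic S) (hirr : MatIrreducible S)
    (r : Fin n → ℝ) (hr : ∀ i, r i ≠ 0)
    (hsym : (Matrix.diagonal r * S * (Matrix.diagonal r)⁻¹).IsSymm)
    (f₁ f₂ : Fin n → ℝ) (hf₁ : ∀ j, 0 < f₁ j) (hf₂ : ∀ j, 0 < f₂ j)
    (htemp : f₂ ≠ f₁)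
    (hspat : (∃ j k, f₁ j ≠ f₁ k) ∨ (∃ j k, f₂ j ≠ f₂ k))
    (d : Fin m → ℝ) (hd : ∀ i, d i ∈ Set.Icc (0 : ℝ) 1)
    (hfix : ∀ i, ∃ x : Fin n → ℝ, (∀ j, 0 < x j) ∧
      (((1 - d i) • 1 + d i • S) * Matrix.diagonal f₂ *
        (((1 - d i) • 1 + d i • S) * Matrix.diagonal f₁)).mulVec x = x)
    (hnash : ∀ dt : ℝ, 0 ≤ dt → dt ≤ 1 →
      specRad (((1 - dt) • 1 + dt • S) * Matrix.diagonal f₂ *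
        (((1 - dt) • 1 + dt • S) * Matrix.diagonal f₁)) ≤ 1) :
    (∃ i, 0 < d i) ∧ (∀ j, f₁ j * f₂ j ≤ 1) ∧ (∃ j, f₁ j * f₂ j < 1) :=
  nash_equilibrium_sinks_general hm S hS hirr r hr hsym f₁ f₂ hf₁ hspat d hd hfix hnash
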